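/- Let X be a random vector in the positive part S of the unit sphere of R^d, let x₁,...,x_k ∈ S, let (A₁,...,A_k) be the associated Voronoi partition of S, and set Σ_i = E(X Xᵀ 1{X∈A_i}). Let x̂_i ∈ S be a nonnegative unit-norm eigenvector of Σ_i for its largest eigenvalue (which exists by Perron–Frobenius). Then E(max_{i≤k} (x_iᵀX)²) ≤ ∑_{i=1}^k λ₁(Σ_i) ≤ E(max_{i≤k} (x̂_iᵀX)²). -/

import Mathlib

/-!
Split the sample space along the Voronoi cells `A i` of the centroids. Because all vectors lie in
the positive orthant, every inner product `x j ⬝ᵥ X` is nonnegative, so on `A i` the maximum of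
the squares `(x j ⬝ᵥ X) ^ 2` is attained at `j = i`; hence `E max_i (x i ⬝ᵥ X) ^ 2` is the sum of
the quadratic forms `x i ⬝ᵥ Σ_i x i`, each of which is at most `λ₁(Σ_i)` by the Rayleigh bound.
Conversely `λ₁(Σ_i) = x̂ i ⬝ᵥ Σ_i x̂ i = E[(x̂ i ⬝ᵥ X) ^ 2; A i]`, and summing over the disjoint
cells is at most `E max_i (x̂ i ⬝ᵥ X) ^ 2`.
-/

open MeasureTheory Matrix

/-- The `j`-th largest eigenvalue (counted with multiplicity, `j = 0` being the largest)
of a Hermitian real matrix. -/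
noncomputable def kthEig {d : ℕ} (A : Matrix (Fin d) (Fin d) ℝ) (hA : A.IsHermitian)
    (j : ℕ) : ℝ :=
  ((List.ofFn hA.eigenvalues).mergeSort (fun a b => decide (b ≤ a))).getD j 0

/-- The Voronoi cell of the centroid `x i` among `x 1, …, x k` (ties broken in favour
of the smallest index), intersected with the positive unit sphere `S`. -/
def voronoiCell {d k : ℕ} (S : Set (Fin d → ℝ)) (x : Fin k → Fin d → ℝ) (i : Fin k) :
    Set (Fin d → ℝ) :=
  {y ∈ S | (∀ j, i < j → x j ⬝ᵥ y ≤ x i ⬝ᵥ y) ∧ (∀ j, j < i → x j ⬝ᵥ y < x i ⬝ᵥ y)}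

open Function

def posUnitSphere (d : ℕ) : Set (Fin d → ℝ) := {y | (∀ t, 0 ≤ y t) ∧ ∑ t, y t ^ 2 = 1}

section PosUnitSphere

variable {d : ℕ} {v y : Fin d → ℝ}

theorem isClosed_posUnitSphere : IsClosed (posUnitSphere d) := by
  simp only [posUnitSphere, Set.ofPred_and, Set.ofPred_forall]
  exact (isClosed_iInter fun t => isClosed_le continuous_const (continuous_apply t)).inter
    (isClosed_eq (by fun_prop) continuous_const)

theorem dotProduct_self_of_mem_posUnitSphere (hy : y ∈ posUnitSphere d) : y ⬝ᵥ y = 1 := by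
  simpa [dotProduct, sq] using hy.2

theorem dotProduct_nonneg_of_mem_posUnitSphere (hv : v ∈ posUnitSphere d)
    (hy : y ∈ posUnitSphere d) : 0 ≤ v ⬝ᵥ y :=
  dotProduct_nonneg_of_nonneg hv.1 hy.1

theorem sq_dotProduct_le_one_of_mem_posUnitSphere (hv : v ∈ posUnitSphere d)
    (hy : y ∈ posUnitSphere d) : (v ⬝ᵥ y) ^ 2 ≤ 1 := by
  have := Finset.sum_mul_sq_le_sq_mul_sq Finset.univ v y
  rwa [hv.2, hy.2, mul_one] at this

theorem abs_apply_le_one_of_mem_posUnitSphere (hy : y ∈ posUnitSphere d) (t : Fin d) : |y t| ≤ 1 :=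
  sq_le_one_iff_abs_le_one _ |>.1 <|
    hy.2 ▸ Finset.single_le_sum (fun s _ => sq_nonneg (y s)) (Finset.mem_univ t)

end PosUnitSphere

section VoronoiCell

variable {d k : ℕ} {S : Set (Fin d → ℝ)} {x : Fin k → Fin d → ℝ} {i : Fin k} {y : Fin d → ℝ}

theorem measurableSet_voronoiCell (hS : MeasurableSet S) (x : Fin k → Fin d → ℝ) (i : Fin k) :
    MeasurableSet (voronoiCell S x i) := by
  have hdot : ∀ j, Measurable fun y : Fin d → ℝ => x j ⬝ᵥ y := fun j =>
    (continuous_const.dotProduct continuous_id).measurable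
  refine hS.inter (Measurable.setOf ?_)
  exact .and (.forall fun j => .imp measurable_const (measurableSet_le (hdot j) (hdot i)).mem)
    (.forall fun j => .imp measurable_const (measurableSet_lt (hdot j) (hdot i)).mem)

theorem dotProduct_le_of_mem_voronoiCell (hy : y ∈ voronoiCell S x i) (j : Fin k) :
    x j ⬝ᵥ y ≤ x i ⬝ᵥ y := by
  rcases lt_trichotomy i j with h | rfl | h
  · exact hy.2.1 j h
  · exact le_rfl
  · exact (hy.2.2 j h).le

theorem pairwise_disjoint_voronoiCell (S : Set (Fin d → ℝ)) (x : Fin k → Fin d → ℝ) :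
    Pairwise (Disjoint on voronoiCell S x) := by
  intro i j hij
  refine Set.disjoint_left.2 fun y hi hj => ?_
  rcases hij.lt_or_gt with h | h
  · exact (hj.2.2 i h).not_ge (dotProduct_le_of_mem_voronoiCell hi j)
  · exact (hi.2.2 j h).not_ge (dotProduct_le_of_mem_voronoiCell hj i)

-- The cell containing `y` is that of the smallest index at which `j ↦ x j ⬝ᵥ y` is maximal.
theorem exists_mem_voronoiCell [Nonempty (Fin k)] (x : Fin k → Fin d → ℝ) (hy : y ∈ S) :
    ∃ i, y ∈ voronoiCell S x i := by
  classical
  obtain ⟨m, -, hm⟩ := Finset.univ.exists_max_image (fun j => x j ⬝ᵥ y) Finset.univ_nonempty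
  let T := Finset.univ.filter fun j => x j ⬝ᵥ y = x m ⬝ᵥ y
  have hT : T.Nonempty := ⟨m, by simp [T]⟩
  have hiT : x (T.min' hT) ⬝ᵥ y = x m ⬝ᵥ y := (Finset.mem_filter.1 (T.min'_mem hT)).2
  refine ⟨T.min' hT, hy, fun j _ => hiT ▸ hm j (Finset.mem_univ j), fun j hj => ?_⟩
  refine hiT ▸ (hm j (Finset.mem_univ j)).lt_of_ne fun hjm => ?_
  exact (T.min'_le j (by simp [T, hjm])).not_gt hj

theorem iSup_sq_dotProduct_of_mem_voronoiCell (hy : y ∈ voronoiCell S x i)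
    (hx : ∀ j, 0 ≤ x j ⬝ᵥ y) : ⨆ j, (x j ⬝ᵥ y) ^ 2 = (x i ⬝ᵥ y) ^ 2 :=
  le_antisymm
    (Real.iSup_le (fun j => pow_le_pow_left₀ (hx j) (dotProduct_le_of_mem_voronoiCell hy j) 2)
      (sq_nonneg _))
    (le_ciSup (f := fun j => (x j ⬝ᵥ y) ^ 2) (Set.finite_range _).bddAbove i)

end VoronoiCell

theorem List.le_getD_zero_of_pairwise_ge {α : Type*} [Preorder α] {l : List α}
    (hl : l.Pairwise (· ≥ ·)) {a : α} (ha : a ∈ l) (b : α) : a ≤ l.getD 0 b := by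
  cases l with
  | nil => simp at ha
  | cons c l =>
    rcases List.mem_cons.1 ha with rfl | ha
    · rfl
    · exact (List.pairwise_cons.1 hl).1 a ha

theorem eigenvalues_le_kthEig_zero {n : ℕ} {A : Matrix (Fin n) (Fin n) ℝ} (hA : A.IsHermitian)
    (j : Fin n) : hA.eigenvalues j ≤ kthEig A hA 0 :=
  List.le_getD_zero_of_pairwise_ge (List.pairwise_mergeSort' (· ≥ ·) _)
    ((List.mergeSort_perm _ _).mem_iff.2 ((List.mem_ofFn' _ _).2 ⟨j, rfl⟩)) 0

theorem dotProduct_mulVec_le_kthEig_zero {n : ℕ} {A : Matrix (Fin n) (Fin n) ℝ}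
    (hA : A.IsHermitian) (y : Fin n → ℝ) : y ⬝ᵥ (A *ᵥ y) ≤ kthEig A hA 0 * (y ⬝ᵥ y) := by
  have hpsd : (algebraMap ℝ _ (kthEig A hA 0) - A).PosSemidef := by
    rw [posSemidef_iff_isHermitian_and_spectrum_nonneg, ← spectrum.singleton_sub_eq,
      hA.spectrum_real_eq_range_eigenvalues, algebraMap_eq_diagonal]
    refine ⟨(isHermitian_diagonal _).sub hA, ?_⟩
    rintro _ ⟨c, rfl, _, ⟨j, rfl⟩, rfl⟩
    exact sub_nonneg.2 (eigenvalues_le_kthEig_zero hA j)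
  simpa [sub_mulVec, Algebra.algebraMap_eq_smul_one, smul_mulVec] using
    hpsd.dotProduct_mulVec_nonneg y

section Integrals

variable {Ω : Type*} [MeasurableSpace Ω] {μ : Measure Ω}

noncomputable def secondMoment {n : Type*} (μ : Measure Ω) (X : Ω → n → ℝ) : Matrix n n ℝ :=
  Matrix.of fun s t => ∫ ω, X ω s * X ω t ∂μ

theorem dotProduct_secondMoment_mulVec {n : Type*} [Fintype n] {X : Ω → n → ℝ}
    (hX : ∀ s t, Integrable (fun ω => X ω s * X ω t) μ) (v : n → ℝ) :
    v ⬝ᵥ (secondMoment μ X *ᵥ v) = ∫ ω, (v ⬝ᵥ X ω) ^ 2 ∂μ := by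
  have hsq : ∀ ω, (v ⬝ᵥ X ω) ^ 2 = ∑ s, ∑ t, v s * v t * (X ω s * X ω t) := fun ω => by
    simp only [sq, dotProduct, Finset.sum_mul_sum]
    exact Finset.sum_congr rfl fun s _ => Finset.sum_congr rfl fun t _ => by ring
  calc v ⬝ᵥ (secondMoment μ X *ᵥ v)
      = ∑ s, ∑ t, ∫ ω, v s * v t * (X ω s * X ω t) ∂μ := by
        simp only [secondMoment, dotProduct, mulVec, of_apply, Finset.mul_sum, integral_const_mul]
        exact Finset.sum_congr rfl fun s _ => Finset.sum_congr rfl fun t _ => by ring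
    _ = ∫ ω, (v ⬝ᵥ X ω) ^ 2 ∂μ := by
        simp only [hsq]
        rw [integral_finsetSum _ fun s _ => integrable_finsetSum _ fun t _ => (hX s t).const_mul _]
        exact Finset.sum_congr rfl fun s _ =>
          (integral_finsetSum _ fun t _ => (hX s t).const_mul _).symm

theorem integral_eq_sum_setIntegral {ι : Type*} [Fintype ι] {A : ι → Set Ω}
    (hA : ∀ i, MeasurableSet (A i)) (hdisj : Pairwise (Disjoint on A))
    (hcover : ∀ᵐ ω ∂μ, ∃ i, ω ∈ A i) {f : Ω → ℝ} (hf : Integrable f μ) :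
    ∫ ω, f ω ∂μ = ∑ i, ∫ ω in A i, f ω ∂μ := by
  have hU : (⋃ i, A i : Set Ω) =ᵐ[μ] Set.univ :=
    Filter.eventuallyEq_univ.2 (hcover.mono fun _ => Set.mem_iUnion.2)
  rw [← integral_iUnion_fintype hA hdisj fun i => hf.integrableOn, setIntegral_congr_set hU,
    setIntegral_univ]

theorem sum_setIntegral_le_integral {ι : Type*} [Fintype ι] {A : ι → Set Ω}
    (hA : ∀ i, MeasurableSet (A i)) (hdisj : Pairwise (Disjoint on A)) {f : Ω → ℝ}
    (hf : Integrable f μ) (hf0 : 0 ≤ᵐ[μ] f) : ∑ i, ∫ ω in A i, f ω ∂μ ≤ ∫ ω, f ω ∂μ := by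
  rw [← integral_iUnion_fintype hA hdisj fun i => hf.integrableOn]
  exact setIntegral_le_integral hf hf0

end Integrals

section VoronoiMoments

variable {Ω : Type*} [MeasurableSpace Ω] {μ : Measure Ω} [IsFiniteMeasure μ] {d k : ℕ}
  {X : Ω → Fin d → ℝ}

theorem integrable_mul_apply_of_ae_mem_posUnitSphere (hX : Measurable X)
    (hXS : ∀ᵐ ω ∂μ, X ω ∈ posUnitSphere d) (s t : Fin d) :
    Integrable (fun ω => X ω s * X ω t) μ := by
  refine .of_bound (by fun_prop : Measurable fun ω => X ω s * X ω t).aestronglyMeasurable 1 ?_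
  filter_upwards [hXS] with ω hω
  rw [Real.norm_eq_abs, abs_mul]
  exact mul_le_one₀ (abs_apply_le_one_of_mem_posUnitSphere hω s) (abs_nonneg _)
    (abs_apply_le_one_of_mem_posUnitSphere hω t)

theorem integrable_iSup_sq_dotProduct (hX : Measurable X)
    (hXS : ∀ᵐ ω ∂μ, X ω ∈ posUnitSphere d) {y : Fin k → Fin d → ℝ}
    (hy : ∀ i, y i ∈ posUnitSphere d) : Integrable (fun ω => ⨆ i, (y i ⬝ᵥ X ω) ^ 2) μ := by
  refine .of_bound (Measurable.iSup fun i => by fun_prop).aestronglyMeasurable 1 ?_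
  filter_upwards [hXS] with ω hω
  rw [Real.norm_of_nonneg (Real.iSup_nonneg fun i => sq_nonneg _)]
  exact Real.iSup_le (fun i => sq_dotProduct_le_one_of_mem_posUnitSphere (hy i) hω) zero_le_one

theorem integral_iSup_sq_dotProduct_eq_sum [Nonempty (Fin k)] (hX : Measurable X)
    (hXS : ∀ᵐ ω ∂μ, X ω ∈ posUnitSphere d) {x : Fin k → Fin d → ℝ}
    (hx : ∀ i, x i ∈ posUnitSphere d) :
    ∫ ω, ⨆ i, (x i ⬝ᵥ X ω) ^ 2 ∂μ =
      ∑ i, ∫ ω in X ⁻¹' voronoiCell (posUnitSphere d) x i, (x i ⬝ᵥ X ω) ^ 2 ∂μ := by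
  have hA i := hX (measurableSet_voronoiCell isClosed_posUnitSphere.measurableSet x i)
  rw [integral_eq_sum_setIntegral hA
    ((pairwise_disjoint_voronoiCell _ x).mono fun _ _ h => h.preimage X)
    (hXS.mono fun _ h => exists_mem_voronoiCell x h) (integrable_iSup_sq_dotProduct hX hXS hx)]
  refine Finset.sum_congr rfl fun i _ => setIntegral_congr_fun (hA i) fun ω hω => ?_
  exact iSup_sq_dotProduct_of_mem_voronoiCell hω fun j =>
    dotProduct_nonneg_of_mem_posUnitSphere (hx j) hω.1

theorem sum_setIntegral_sq_dotProduct_le (hX : Measurable X)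
    (hXS : ∀ᵐ ω ∂μ, X ω ∈ posUnitSphere d) {S : Set (Fin d → ℝ)} (hS : MeasurableSet S)
    (x : Fin k → Fin d → ℝ) {y : Fin k → Fin d → ℝ} (hy : ∀ i, y i ∈ posUnitSphere d) :
    ∑ i, ∫ ω in X ⁻¹' voronoiCell S x i, (y i ⬝ᵥ X ω) ^ 2 ∂μ ≤
      ∫ ω, ⨆ i, (y i ⬝ᵥ X ω) ^ 2 ∂μ := by
  have hG := integrable_iSup_sq_dotProduct hX hXS hy
  calc ∑ i, ∫ ω in X ⁻¹' voronoiCell S x i, (y i ⬝ᵥ X ω) ^ 2 ∂μ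
      ≤ ∑ i, ∫ ω in X ⁻¹' voronoiCell S x i, ⨆ j, (y j ⬝ᵥ X ω) ^ 2 ∂μ :=
        Finset.sum_le_sum fun i _ => integral_mono_of_nonneg (.of_forall fun _ => sq_nonneg _)
          hG.integrableOn (.of_forall fun ω =>
            le_ciSup (f := fun j => (y j ⬝ᵥ X ω) ^ 2) (Set.finite_range _).bddAbove i)
    _ ≤ ∫ ω, ⨆ i, (y i ⬝ᵥ X ω) ^ 2 ∂μ :=
        sum_setIntegral_le_integral (fun i => hX (measurableSet_voronoiCell hS x i))
          ((pairwise_disjoint_voronoiCell S x).mono fun _ _ h => h.preimage X) hG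
          (.of_forall fun _ => Real.iSup_nonneg fun _ => sq_nonneg _)

end VoronoiMoments

theorem stmt_13_general {d k : ℕ} (hk : 1 ≤ k) {Ω : Type*} [MeasureSpace Ω]
    [IsProbabilityMeasure (volume : Measure Ω)]
    (S : Set (Fin d → ℝ)) (hSdef : S = {y | (∀ t, 0 ≤ y t) ∧ ∑ t, y t ^ 2 = 1})
    (X : Ω → Fin d → ℝ) (hXmeas : Measurable X) (hXS : ∀ᵐ ω, X ω ∈ S)
    (x : Fin k → Fin d → ℝ) (hx : ∀ i, x i ∈ S)
    (Sig : Fin k → Matrix (Fin d) (Fin d) ℝ)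
    (hSig : ∀ i, Sig i =
      Matrix.of fun s t => ∫ ω in {ω | X ω ∈ voronoiCell S x i}, X ω s * X ω t)
    (hherm : ∀ i, (Sig i).IsHermitian)
    (xhat : Fin k → Fin d → ℝ) (hxhatS : ∀ i, xhat i ∈ S)
    (hxhat : ∀ i, (Sig i) *ᵥ xhat i = kthEig (Sig i) (hherm i) 0 • xhat i) :
    (∫ ω, ⨆ i : Fin k, (x i ⬝ᵥ X ω) ^ 2) ≤ ∑ i, kthEig (Sig i) (hherm i) 0 ∧
      ∑ i, kthEig (Sig i) (hherm i) 0 ≤ ∫ ω, ⨆ i : Fin k, (xhat i ⬝ᵥ X ω) ^ 2 := by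
  have hS : S = posUnitSphere d := hSdef
  subst hS
  have : Nonempty (Fin k) := ⟨⟨0, hk⟩⟩
  have hquad : ∀ i v, v ⬝ᵥ (Sig i *ᵥ v) =
      ∫ ω in X ⁻¹' voronoiCell (posUnitSphere d) x i, (v ⬝ᵥ X ω) ^ 2 := fun i v => by
    rw [hSig i]
    exact dotProduct_secondMoment_mulVec
      (fun s t => (integrable_mul_apply_of_ae_mem_posUnitSphere hXmeas hXS s t).integrableOn) v
  constructor
  · rw [integral_iSup_sq_dotProduct_eq_sum hXmeas hXS hx]
    refine Finset.sum_le_sum fun i _ => ?_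
    rw [← hquad]
    exact (dotProduct_mulVec_le_kthEig_zero (hherm i) (x i)).trans_eq
      (by rw [dotProduct_self_of_mem_posUnitSphere (hx i), mul_one])
  · have heig : ∀ i, kthEig (Sig i) (hherm i) 0 = xhat i ⬝ᵥ (Sig i *ᵥ xhat i) := fun i => by
      rw [hxhat i, dotProduct_smul, dotProduct_self_of_mem_posUnitSphere (hxhatS i), smul_eq_mul,
        mul_one]
    simp only [heig, hquad]
    exact sum_setIntegral_sq_dotProduct_le hXmeas hXS isClosed_posUnitSphere.measurableSet x hxhatS

theorem stmt_13 {d k : ℕ} (hd : 2 ≤ d) (hk : 1 ≤ k) {Ω : Type*} [MeasureSpace Ω]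
    [IsProbabilityMeasure (volume : Measure Ω)]
    (S : Set (Fin d → ℝ)) (hSdef : S = {y | (∀ t, 0 ≤ y t) ∧ ∑ t, y t ^ 2 = 1})
    (X : Ω → Fin d → ℝ) (hXmeas : Measurable X) (hXS : ∀ᵐ ω, X ω ∈ S)
    (x : Fin k → Fin d → ℝ) (hx : ∀ i, x i ∈ S)
    (Sig : Fin k → Matrix (Fin d) (Fin d) ℝ)
    (hSig : ∀ i, Sig i =
      Matrix.of fun s t => ∫ ω in {ω | X ω ∈ voronoiCell S x i}, X ω s * X ω t)
    (hherm : ∀ i, (Sig i).IsHermitian)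
    (xhat : Fin k → Fin d → ℝ) (hxhatS : ∀ i, xhat i ∈ S)
    (hxhat : ∀ i, (Sig i) *ᵥ xhat i = kthEig (Sig i) (hherm i) 0 • xhat i) :
    (∫ ω, ⨆ i : Fin k, (x i ⬝ᵥ X ω) ^ 2) ≤ ∑ i, kthEig (Sig i) (hherm i) 0 ∧
      ∑ i, kthEig (Sig i) (hherm i) 0 ≤ ∫ ω, ⨆ i : Fin k, (xhat i ⬝ᵥ X ω) ^ 2 :=
  stmt_13_general hk S hSdef X hXmeas hXS x hx Sig hSig hherm xhat hxhatS hxhat
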